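/- Let n ≥ 1, m ≥ 4n−1, and let R_s ∈ ℂ^{n×n} be the slit reference, R_s(t1,t2) = 1 if t2 = n−1 and 0 otherwise. Then for all k1, k2 ∈ {0,...,m−1}, the reference scaling factor is S_{R_s}(k1,k2) = (n/m⁴)·[1 + 2(n−1)(1 − cos(2π·k2/m))]. -/

import Mathlib

open Complex MeasureTheory ProbabilityTheory Matrix ComplexConjugate
open scoped Kronecker

noncomputable section

/-- Zero-extension of a matrix to integer indices: out-of-range entries are `0`. -/
def zext {n1 n2 : ℕ} (X : Matrix (Fin n1) (Fin n2) ℂ) (t1 t2 : ℤ) : ℂ :=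
  if h : 0 ≤ t1 ∧ t1 < (n1 : ℤ) ∧ 0 ≤ t2 ∧ t2 < (n2 : ℤ) then
    X ⟨t1.toNat, by omega⟩ ⟨t2.toNat, by omega⟩
  else 0

/-- Cross-correlation `C_{[X1,X2]}(s1,s2)`, with out-of-range terms taken as `0`. -/
def crossCorr {n1 n2 : ℕ} (X1 X2 : Matrix (Fin n1) (Fin n2) ℂ) (s1 s2 : ℤ) : ℂ :=
  ∑ t1 : Fin n1, ∑ t2 : Fin n2,
    X1 t1 t2 * conj (zext X2 (((t1 : ℕ) : ℤ) - s1) (((t2 : ℕ) : ℤ) - s2))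

/-- Autocorrelation `A_X = C_{[X,X]}`. -/
def autocorr {n1 n2 : ℕ} (X : Matrix (Fin n1) (Fin n2) ℂ) : ℤ → ℤ → ℂ :=
  crossCorr X X

/-- Horizontal concatenation `[X, R]` of two `n × n` matrices. -/
def hcat {n : ℕ} (X R : Matrix (Fin n) (Fin n) ℂ) : Matrix (Fin n) (Fin (2 * n)) ℂ :=
  Matrix.of fun t1 t2 =>
    if h : (t2 : ℕ) < n then X t1 ⟨t2, h⟩ else R t1 ⟨(t2 : ℕ) - n, by omega⟩

/-- The size `m1 × m2` oversampled discrete Fourier transform of an `n1 × n2` signal. -/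
def dft2 {n1 n2 : ℕ} (m1 m2 : ℕ) (Z : Matrix (Fin n1) (Fin n2) ℂ) (k1 k2 : ℕ) : ℂ :=
  ∑ t1 : Fin n1, ∑ t2 : Fin n2,
    Z t1 t2 * Complex.exp (-(2 * (Real.pi : ℂ) * Complex.I) *
      (((t1 : ℕ) : ℂ) * (k1 : ℂ) / (m1 : ℂ) + ((t2 : ℕ) : ℂ) * (k2 : ℂ) / (m2 : ℂ)))

/-- Quadrant cross-correlation `C°_{[X,R]}(i,j) = C_{[X,R]}(i-(n-1), j-(n-1))`. -/
def quadCC {n : ℕ} (X R : Matrix (Fin n) (Fin n) ℂ) : Matrix (Fin n) (Fin n) ℂ :=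
  Matrix.of fun i j =>
    crossCorr X R (((i : ℕ) : ℤ) - ((n : ℤ) - 1)) (((j : ℕ) : ℤ) - ((n : ℤ) - 1))

/-- Columnwise vectorization: the pair `(j, i)` (column `j`, row `i`) indexes entry `X i j`. -/
def vecM {a b : ℕ} (X : Matrix (Fin a) (Fin b) ℂ) : Fin b × Fin a → ℂ :=
  fun p => X p.2 p.1

/-- The matrix `M_R` satisfying `vec (C°_{[X,R]}) = M_R • vec X` (columnwise vectorization). -/
def MR {n : ℕ} (R : Matrix (Fin n) (Fin n) ℂ) :
    Matrix (Fin n × Fin n) (Fin n × Fin n) ℂ :=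
  Matrix.of fun p q =>
    conj (zext R (((q.2 : ℕ) : ℤ) - ((p.2 : ℕ) : ℤ) + ((n : ℤ) - 1))
      (((q.1 : ℕ) : ℤ) - ((p.1 : ℕ) : ℤ) + ((n : ℤ) - 1)))

/-- `P1 · F_LA^*`: row `t ∈ {0,…,n-1}` corresponds to the column `t - (n-1)` of `F_LA`. -/
def P1FLA (n m : ℕ) : Matrix (Fin n) (Fin m) ℂ :=
  Matrix.of fun t k =>
    Complex.exp ((2 * (Real.pi : ℂ) * Complex.I) * ((k : ℕ) : ℂ) *
      (((t : ℕ) : ℂ) - ((n : ℂ) - 1)) / (m : ℂ))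

/-- `P2 · F_RA^*`: row `t ∈ {0,…,n-1}` corresponds to the column `t - (2n-1)` of `F_RA`. -/
def P2FRA (n m : ℕ) : Matrix (Fin n) (Fin m) ℂ :=
  Matrix.of fun t k =>
    Complex.exp ((2 * (Real.pi : ℂ) * Complex.I) * ((k : ℕ) : ℂ) *
      (((t : ℕ) : ℂ) - (2 * (n : ℂ) - 1)) / (m : ℂ))

/-- The referenced-deconvolution matrix
`T_R = (1/m²) · M_R⁻¹ · [(P2 F_RA^*) ⊗ (P1 F_LA^*)]`. -/
def TR {n : ℕ} (m : ℕ) (R : Matrix (Fin n) (Fin n) ℂ) :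
    Matrix (Fin n × Fin n) (Fin m × Fin m) ℂ :=
  ((m : ℂ) ^ 2)⁻¹ • ((MR R)⁻¹ * (P2FRA n m ⊗ₖ P1FLA n m))

/-- The reference scaling factor: `S_R(k1,k2)` is the squared ℓ²-norm of the column of `T_R`
indexed by the pair `(k1, k2)` (i.e. column `m·k1 + k2`). -/
def SR {n : ℕ} (m : ℕ) (R : Matrix (Fin n) (Fin n) ℂ) (k1 k2 : Fin m) : ℝ :=
  ∑ p : Fin n × Fin n, ‖TR m R p (k1, k2)‖ ^ 2

/-- Lower-triangular all-ones matrix `1_L`. -/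
def oneL (n : ℕ) : Matrix (Fin n) (Fin n) ℂ :=
  Matrix.of fun i j => if j ≤ i then 1 else 0

/-- First-order difference matrix `D_n` (the inverse of `1_L`). -/
def Dmat (n : ℕ) : Matrix (Fin n) (Fin n) ℂ :=
  Matrix.of fun i j => if i = j then 1 else if (j : ℕ) + 1 = (i : ℕ) then -1 else 0

/-- Pinhole reference. -/
def pinholeRef (n : ℕ) : Matrix (Fin n) (Fin n) ℂ :=
  Matrix.of fun t1 t2 => if (t1 : ℕ) = n - 1 ∧ (t2 : ℕ) = n - 1 then 1 else 0

/-- Slit reference. -/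
def slitRef (n : ℕ) : Matrix (Fin n) (Fin n) ℂ :=
  Matrix.of fun _ t2 => if (t2 : ℕ) = n - 1 then 1 else 0

/-- Block reference. -/
def blockRef (n : ℕ) : Matrix (Fin n) (Fin n) ℂ :=
  Matrix.of fun _ _ => 1

/-! For the slit reference `M_{R_s} = I_n ⊗ 1_L`, so `M_{R_s}⁻¹ = I_n ⊗ D_n`, and the mixed-product
rule turns `T_{R_s}` into `m⁻² · (P2 F_RA^*) ⊗ (D_n P1 F_LA^*)`. The Fourier factors have entries of
modulus one, so the squared norm of column `(k1, k2)` is `n/m⁴` times that of column `k2` of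
`D_n P1 F_LA^*`. Its first entry has modulus one, and each of the other `n - 1` entries is a
difference `e^{iθ(t+1)} - e^{iθt}` of consecutive phases, `θ = 2πk2/m`, of squared modulus
`|e^{iθ} - 1|² = 2 - 2 cos θ`. -/

theorem MR_slitRef (n : ℕ) : MR (slitRef n) = 1 ⊗ₖ oneL n := by
  ext ⟨i1, i2⟩ ⟨j1, j2⟩
  have := i1.isLt; have := i2.isLt; have := j1.isLt; have := j2.isLt
  simp only [MR, zext, slitRef, oneL, kronecker_apply, one_apply, of_apply, Fin.ext_iff, Fin.le_def]
  split_ifs <;> simp_all <;> omega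

theorem Dmat_mul_apply_zero {n : ℕ} {ι : Type*} (A : Matrix (Fin (n + 1)) ι ℂ) (k : ι) :
    (Dmat (n + 1) * A) 0 k = A 0 k := by
  rw [mul_apply, Fintype.sum_eq_single 0]
  · simp [Dmat]
  · intro q hq
    simp [Dmat, Ne.symm hq]

theorem Dmat_mul_apply_succ {n : ℕ} {ι : Type*} (A : Matrix (Fin (n + 1)) ι ℂ) (i : Fin n)
    (k : ι) : (Dmat (n + 1) * A) i.succ k = A i.succ k - A i.castSucc k := by
  rw [mul_apply, Fintype.sum_eq_add i.succ i.castSucc Fin.castSucc_lt_succ.ne']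
  · simp [Dmat, Fin.castSucc_lt_succ.ne', sub_eq_add_neg]
  · rintro q ⟨hq1, hq2⟩
    rw [Ne, Fin.ext_iff, Fin.val_succ] at hq1
    rw [Ne, Fin.ext_iff, Fin.val_castSucc] at hq2
    simp only [Dmat, of_apply, Fin.ext_iff, Fin.val_succ]
    split_ifs <;> first | omega | simp

theorem Dmat_mul_oneL (n : ℕ) : Dmat n * oneL n = 1 := by
  cases n with
  | zero => exact Subsingleton.elim _ _
  | succ n =>
    ext i j
    cases i using Fin.cases with
    | zero => simp [Dmat_mul_apply_zero, oneL, one_apply, eq_comm]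
    | succ i =>
      simp only [Dmat_mul_apply_succ, oneL, one_apply, of_apply]
      split_ifs <;> simp_all [Fin.ext_iff, Fin.le_def] <;> omega

theorem inv_oneL (n : ℕ) : (oneL n)⁻¹ = Dmat n :=
  inv_eq_left_inv (Dmat_mul_oneL n)

theorem TR_slitRef (n m : ℕ) :
    TR m (slitRef n) = ((m : ℂ) ^ 2)⁻¹ • (P2FRA n m ⊗ₖ (Dmat n * P1FLA n m)) := by
  rw [TR, MR_slitRef, inv_kronecker, inv_one, inv_oneL, ← mul_kronecker_mul, Matrix.one_mul]

theorem norm_P1FLA (n m : ℕ) (t : Fin n) (k : Fin m) : ‖P1FLA n m t k‖ = 1 := by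
  rw [P1FLA, of_apply, ← norm_exp_ofReal_mul_I (2 * Real.pi * k * (t - ((n : ℝ) - 1)) / m)]
  push_cast
  ring_nf

theorem norm_P2FRA (n m : ℕ) (t : Fin n) (k : Fin m) : ‖P2FRA n m t k‖ = 1 := by
  rw [P2FRA, of_apply, ← norm_exp_ofReal_mul_I (2 * Real.pi * k * (t - (2 * (n : ℝ) - 1)) / m)]
  push_cast
  ring_nf

theorem P1FLA_succ (n m : ℕ) (i : Fin n) (k : Fin m) :
    P1FLA (n + 1) m i.succ k =
      P1FLA (n + 1) m i.castSucc k * exp (↑(2 * Real.pi * k / m) * I) := by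
  simp only [P1FLA, of_apply, ← Complex.exp_add, Fin.val_succ, Fin.val_castSucc]
  push_cast
  ring_nf

theorem norm_exp_ofReal_mul_I_sub_one_sq (θ : ℝ) :
    ‖exp (θ * I) - 1‖ ^ 2 = 2 - 2 * Real.cos θ := by
  rw [mul_comm, norm_exp_I_mul_ofReal_sub_one, Real.norm_eq_abs, sq_abs, mul_pow,
    Real.sin_sq_eq_half_sub, show 2 * (θ / 2) = θ by ring]
  ring

theorem norm_sq_TR_slitRef (n m : ℕ) (p : Fin n × Fin n) (k1 k2 : Fin m) :
    ‖TR m (slitRef n) p (k1, k2)‖ ^ 2 = ((m : ℝ) ^ 4)⁻¹ * ‖(Dmat n * P1FLA n m) p.2 k2‖ ^ 2 := by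
  rw [TR_slitRef, Matrix.smul_apply, kronecker_apply, smul_eq_mul, norm_mul, norm_mul, norm_P2FRA,
    norm_inv, norm_pow, Complex.norm_natCast]
  ring

theorem sum_norm_sq_Dmat_mul_P1FLA (n m : ℕ) (k : Fin m) :
    ∑ t, ‖(Dmat (n + 1) * P1FLA (n + 1) m) t k‖ ^ 2 =
      1 + n * (2 - 2 * Real.cos (2 * Real.pi * k / m)) := by
  simp only [Fin.sum_univ_succ, Dmat_mul_apply_zero, Dmat_mul_apply_succ, P1FLA_succ,
    ← mul_sub_one, norm_mul, norm_P1FLA, one_mul, one_pow, norm_exp_ofReal_mul_I_sub_one_sq,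
    Finset.sum_const, Finset.card_univ, Fintype.card_fin, nsmul_eq_mul]

theorem slit_scaling_factor_general
    (n m : ℕ) (k1 k2 : Fin m) :
    SR m (slitRef n) k1 k2 =
      ((n : ℝ) / (m : ℝ) ^ 4) *
        (1 + 2 * ((n : ℝ) - 1) * (1 - Real.cos (2 * Real.pi * ((k2 : ℕ) : ℝ) / (m : ℝ)))) := by
  simp only [SR, norm_sq_TR_slitRef, Fintype.sum_prod_type, ← Finset.mul_sum, Finset.sum_const,
    Finset.card_univ, Fintype.card_fin, nsmul_eq_mul]
  cases n with
  | zero => simp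
  | succ n =>
    rw [sum_norm_sq_Dmat_mul_P1FLA]
    push_cast
    ring

/-- The reference scaling factor of the slit reference is
`S_{R_s}(k1,k2) = (n/m⁴)·[1 + 2(n-1)(1 - cos(2π·k2/m))]`. -/
theorem slit_scaling_factor
    (n m : ℕ) (hn : 1 ≤ n) (hm : 4 * n - 1 ≤ m) (k1 k2 : Fin m) :
    SR m (slitRef n) k1 k2 =
      ((n : ℝ) / (m : ℝ) ^ 4) *
        (1 + 2 * ((n : ℝ) - 1) * (1 - Real.cos (2 * Real.pi * ((k2 : ℕ) : ℝ) / (m : ℝ)))) :=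
  slit_scaling_factor_general n m k1 k2
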